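/- Under the centered model, let f ∈ C²(ℝ) be an even function with sup_{x∈ℝ}|f″(x)| < ∞, lim_{x→+∞} x f′(x) = +∞ and f″(0) < 0, and assume in addition that f″ is locally Lipschitz with |f‴(x)| ≤ F₃ < ∞ for almost every x. For λ ≥ 0 define L_λ(α, β) = E f(α + β^⊤X) + (λ/2)α², and set W = ‖μ‖₂Y + (μ/‖μ‖₂)^⊤Z (so that E W² = ‖μ‖₂² + 1 and E|W|³ < ∞). Then every c > 0 such that (0, c·μ/‖μ‖₂) is a critical point of L_λ satisfies c ≥ −f″(0)(‖μ‖₂² + 1)/(F₃·E|W|³). -/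

import Mathlib

/-!
Write `u = μ/‖μ‖` and `W = ⟪X, u⟫ = ‖μ‖Y + ⟪u, Z⟫`. The loss is differentiable (differentiation
under the integral sign, dominated through `|f'(x)| ≤ F₂|x|` and `E‖X‖² < ∞`), and its
derivative at `(0, c u)` in the direction `(0, u)` is `E[f'(cW) W]`, which therefore vanishes at
a critical point. Evenness gives `f'(0) = 0`, so the Lipschitz bound on `f''` yields
`|f'(x) - f''(0) x| ≤ F₃ x²`; hence `0 = E[f'(cW) W] ≥ f''(0) c E W² - F₃ c² E|W|³`, where
`E W² = ‖μ‖² + 1` because the sign `Y` is independent of the centred, normalised `⟪u, Z⟫`.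
Dividing by `c` gives the bound.
-/

open MeasureTheory ProbabilityTheory
open scoped RealInnerProductSpace

/-- `ℝ^d` with the Euclidean norm. -/
abbrev Vec (d : ℕ) := EuclideanSpace ℝ (Fin d)

/-- `ℝ × ℝ^d` with the Euclidean (ℓ²) norm, the domain of the loss `(α, β) ↦ L(α, β)`. -/
abbrev Pr (d : ℕ) := WithLp 2 (ℝ × Vec d)

/-- Build the point `(α, β) ∈ ℝ × ℝ^d`. -/
noncomputable def mkp {d : ℕ} (α : ℝ) (β : Vec d) : Pr d :=
  (WithLp.equiv 2 (ℝ × Vec d)).symm (α, β)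

/-- The quartic loss `h(x) = (x² - 1)² / 4`. -/
noncomputable def hq (x : ℝ) : ℝ := (x ^ 2 - 1) ^ 2 / 4

/-- The population loss `γ = (α, β) ↦ E g(α + β⊤X) + (λ/2) α²` built from a scalar loss `g`. -/
noncomputable def popLoss {d : ℕ} {Ω : Type*} [MeasurableSpace Ω] (P : Measure Ω)
    (X : Ω → Vec d) (g : ℝ → ℝ) (lam : ℝ) (γ : Pr d) : ℝ :=
  (∫ ω, g ((WithLp.equiv 2 (ℝ × Vec d) γ).1 + ⟪(WithLp.equiv 2 (ℝ × Vec d) γ).2, X ω⟫) ∂P)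
    + lam / 2 * ((WithLp.equiv 2 (ℝ × Vec d) γ).1) ^ 2

open scoped NNReal ENNReal

theorem Function.Even.deriv_zero {f : ℝ → ℝ} (hf : Function.Even f) : deriv f 0 = 0 := by
  have h := deriv_comp_neg f 0
  rw [show (fun x => f (-x)) = f from funext hf, neg_zero] at h
  linarith

theorem real_inner_inv_norm_smul_self {F : Type*} [NormedAddCommGroup F]
    [InnerProductSpace ℝ F] (x : F) : ⟪x, ‖x‖⁻¹ • x⟫ = ‖x‖ := by
  rw [real_inner_smul_right, real_inner_self_eq_norm_sq, sq, ← mul_assoc, inv_mul_mul_self]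

theorem abs_le_mul_abs_of_abs_deriv_le {φ : ℝ → ℝ} {C : ℝ} (hφ : Differentiable ℝ φ)
    (hφ0 : φ 0 = 0) (hC : ∀ x, |deriv φ x| ≤ C) (x : ℝ) : |φ x| ≤ C * |x| := by
  simpa [hφ0] using convex_univ.norm_image_sub_le_of_norm_deriv_le (fun t _ => hφ t)
    (fun t _ => hC t) (Set.mem_univ 0) (Set.mem_univ x)

theorem abs_sub_le_mul_sq_of_abs_deriv_le {g : ℝ → ℝ} {K : ℝ} (hg : Differentiable ℝ g)
    (hK : ∀ t, |deriv g t| ≤ K * |t|) (x : ℝ) : |g x - g 0| ≤ K * x ^ 2 := by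
  have hK0 : 0 ≤ K := by simpa using (abs_nonneg _).trans (hK 1)
  have h := (convex_closedBall (0 : ℝ) |x|).norm_image_sub_le_of_norm_deriv_le (y := x)
    (fun t _ => hg t) (fun t ht => (hK t).trans (mul_le_mul_of_nonneg_left
      (by simpa using (Metric.mem_closedBall.mp ht)) hK0))
    (Metric.mem_closedBall_self (abs_nonneg x)) (by simp)
  rw [Real.norm_eq_abs, Real.norm_eq_abs, sub_zero, mul_assoc, abs_mul_abs_self] at h
  rwa [sq]

theorem abs_sub_sub_deriv_mul_le_of_lipschitzWith {φ : ℝ → ℝ} {K : ℝ≥0}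
    (hφ : Differentiable ℝ φ) (hK : LipschitzWith K (deriv φ)) (x : ℝ) :
    |φ x - φ 0 - deriv φ 0 * x| ≤ K * x ^ 2 := by
  have hderiv (t : ℝ) : deriv (fun t => φ t - deriv φ 0 * t) t = deriv φ t - deriv φ 0 := by
    rw [deriv_fun_sub (hφ t) (by fun_prop), deriv_const_mul_field', deriv_id'']; simp
  have h := abs_sub_le_mul_sq_of_abs_deriv_le (g := fun t => φ t - deriv φ 0 * t)
    (hφ.sub (differentiable_id.const_mul _)) (fun t => by
      simpa [hderiv, Real.dist_eq] using hK.dist_le_mul t 0) x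
  simpa [sub_right_comm] using h

section DerivIntegral

variable {E : Type*} [NormedAddCommGroup E] [InnerProductSpace ℝ E] {Ω : Type*}
  [MeasurableSpace Ω] {P : Measure Ω} {f : ℝ → ℝ} {C : ℝ} {p : Ω → E}

theorem norm_deriv_comp_inner_smul_innerSL_le (hf' : ∀ x, |deriv f x| ≤ C * |x|) (x : E)
    (v : E) : ‖deriv f ⟪v, x⟫ • innerSL ℝ v‖ ≤ C * ‖x‖ * ‖v‖ ^ 2 := by
  have hC : 0 ≤ C := by simpa using (abs_nonneg _).trans (hf' 1)
  rw [norm_smul, innerSL_apply_norm, Real.norm_eq_abs]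
  calc |deriv f ⟪v, x⟫| * ‖v‖ ≤ C * (‖v‖ * ‖x‖) * ‖v‖ := by
        gcongr
        exact (hf' _).trans (mul_le_mul_of_nonneg_left (abs_real_inner_le_norm v x) hC)
    _ = C * ‖x‖ * ‖v‖ ^ 2 := by ring

theorem aestronglyMeasurable_deriv_comp_inner_smul_innerSL (hp : AEStronglyMeasurable p P)
    (x : E) : AEStronglyMeasurable (fun ω => deriv f ⟪p ω, x⟫ • innerSL ℝ (p ω)) P :=
  ((measurable_deriv f).comp_aemeasurable (hp.inner aestronglyMeasurable_const).aemeasurable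
    ).aestronglyMeasurable.smul ((innerSL ℝ).continuous.comp_aestronglyMeasurable hp)

theorem integrable_deriv_comp_inner_smul_innerSL (hf' : ∀ x, |deriv f x| ≤ C * |x|)
    (hp : MemLp p 2 P) (x : E) :
    Integrable (fun ω => deriv f ⟪p ω, x⟫ • innerSL ℝ (p ω)) P :=
  ((hp.integrable_norm_pow two_ne_zero).const_mul (C * ‖x‖)).mono'
    (aestronglyMeasurable_deriv_comp_inner_smul_innerSL hp.1 x)
    (.of_forall fun ω => norm_deriv_comp_inner_smul_innerSL_le hf' x (p ω))

theorem integrable_comp_inner [IsFiniteMeasure P] (hf : Differentiable ℝ f)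
    (hf' : ∀ x, |deriv f x| ≤ C * |x|) (hp : MemLp p 2 P) (x : E) :
    Integrable (fun ω => f ⟪p ω, x⟫) P := by
  have hC : 0 ≤ C := by simpa using (abs_nonneg _).trans (hf' 1)
  refine ((integrable_const |f 0|).add ((hp.integrable_norm_pow two_ne_zero).const_mul
    (C * ‖x‖ ^ 2))).mono' (hf.continuous.comp_aestronglyMeasurable
      (hp.1.inner aestronglyMeasurable_const)) (.of_forall fun ω => ?_)
  have hsq : ⟪p ω, x⟫ ^ 2 ≤ ‖p ω‖ ^ 2 * ‖x‖ ^ 2 := by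
    rw [← mul_pow, ← sq_abs]
    exact pow_le_pow_left₀ (abs_nonneg _) (abs_real_inner_le_norm _ _) 2
  have h := abs_sub_le_mul_sq_of_abs_deriv_le hf hf' ⟪p ω, x⟫
  show |f ⟪p ω, x⟫| ≤ |f 0| + C * ‖x‖ ^ 2 * ‖p ω‖ ^ 2
  nlinarith [abs_sub_abs_le_abs_sub (f ⟪p ω, x⟫) (f 0)]

theorem hasFDerivAt_integral_comp_inner [IsFiniteMeasure P] (hf : Differentiable ℝ f)
    (hf' : ∀ x, |deriv f x| ≤ C * |x|) (hp : MemLp p 2 P) (x₀ : E) :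
    HasFDerivAt (fun x => ∫ ω, f ⟪p ω, x⟫ ∂P)
      (∫ ω, deriv f ⟪p ω, x₀⟫ • innerSL ℝ (p ω) ∂P) x₀ := by
  have hC : 0 ≤ C := by simpa using (abs_nonneg _).trans (hf' 1)
  refine hasFDerivAt_integral_of_dominated_of_fderiv_le
    (bound := fun ω => C * (‖x₀‖ + 1) * ‖p ω‖ ^ 2) (Metric.ball_mem_nhds x₀ one_pos)
    (.of_forall fun x => (integrable_comp_inner hf hf' hp x).1)
    (integrable_comp_inner hf hf' hp x₀)
    (aestronglyMeasurable_deriv_comp_inner_smul_innerSL hp.1 x₀)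
    (.of_forall fun ω x hx => ?_)
    ((hp.integrable_norm_pow two_ne_zero).const_mul _)
    (.of_forall fun ω x _ => (hf _).hasDerivAt.comp_hasFDerivAt x ?_)
  · have hx' : ‖x‖ ≤ ‖x₀‖ + 1 := by
      have := norm_le_norm_add_norm_sub' x x₀
      rw [Metric.mem_ball, dist_eq_norm] at hx
      linarith
    refine (norm_deriv_comp_inner_smul_innerSL_le hf' x (p ω)).trans ?_
    gcongr
  · exact (innerSL ℝ (p ω)).hasFDerivAt

end DerivIntegral

section PopLoss

variable {d : ℕ} {Ω : Type*} [MeasurableSpace Ω] {P : Measure Ω}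

theorem inner_mkp_left (a : ℝ) (x : Vec d) (γ : Pr d) :
    ⟪mkp a x, γ⟫ = a * γ.fst + ⟪x, γ.snd⟫ := by
  simp [mkp, WithLp.prod_inner_apply, mul_comm]

theorem inner_mkp_mkp (a b : ℝ) (x y : Vec d) : ⟪mkp a x, mkp b y⟫ = a * b + ⟪x, y⟫ := by
  rw [inner_mkp_left]
  simp [mkp]

theorem memLp_mkp_one [IsFiniteMeasure P] {X : Ω → Vec d} (hX : MemLp X 2 P) :
    MemLp (fun ω => mkp 1 (X ω)) 2 P := by
  let L : Vec d →L[ℝ] Pr d :=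
    (WithLp.prodContinuousLinearEquiv 2 ℝ ℝ (Vec d)).symm.toContinuousLinearMap.comp
      (ContinuousLinearMap.inr ℝ ℝ (Vec d))
  have h (x : Vec d) : mkp 1 0 + L x = mkp 1 x := by
    rw [WithLp.ext_iff]
    simp [L, mkp]
  have h1 : MemLp (fun _ => mkp 1 0 : Ω → Pr d) 2 P := memLp_const _
  convert h1.add (L.comp_memLp' hX) using 1
  funext ω
  exact (h (X ω)).symm

theorem popLoss_eq (X : Ω → Vec d) (g : ℝ → ℝ) (lam : ℝ) :
    popLoss P X g lam = fun γ => (∫ ω, g ⟪mkp 1 (X ω), γ⟫ ∂P) + lam / 2 * ⟪mkp 1 0, γ⟫ ^ 2 := by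
  ext γ
  simp only [inner_mkp_left]
  simp [popLoss, real_inner_comm]

theorem fderiv_popLoss_apply [IsFiniteMeasure P] {X : Ω → Vec d} {f : ℝ → ℝ} {C : ℝ} (lam : ℝ)
    (hf : Differentiable ℝ f) (hf' : ∀ x, |deriv f x| ≤ C * |x|) (hX : MemLp X 2 P)
    (γ v : Pr d) :
    fderiv ℝ (popLoss P X f lam) γ v =
      (∫ ω, deriv f ⟪mkp 1 (X ω), γ⟫ * ⟪mkp 1 (X ω), v⟫ ∂P)
        + lam * ⟪mkp 1 0, γ⟫ * ⟪mkp 1 0, v⟫ := by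
  have hint := hasFDerivAt_integral_comp_inner hf hf' (memLp_mkp_one hX) γ
  have hquad := ((innerSL ℝ (mkp 1 0 : Pr d)).hasFDerivAt (x := γ) |>.pow 2).const_mul (lam / 2)
  have hderiv := hint.fun_add hquad
  simp only [innerSL_apply_apply] at hderiv
  rw [popLoss_eq, hderiv.fderiv, add_apply,
    ContinuousLinearMap.integral_apply
      (integrable_deriv_comp_inner_smul_innerSL hf' (memLp_mkp_one hX) γ)]
  simp only [smul_apply, innerSL_apply_apply, smul_eq_mul, nsmul_eq_mul]
  ring

theorem integral_deriv_mul_inner_eq_zero_of_gradient_popLoss_eq_zero [IsFiniteMeasure P]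
    {X : Ω → Vec d} {f : ℝ → ℝ} {C lam c : ℝ} (hf : Differentiable ℝ f)
    (hf' : ∀ x, |deriv f x| ≤ C * |x|) (hX : MemLp X 2 P) (u : Vec d)
    (hgrad : gradient (popLoss P X f lam) (mkp 0 (c • u)) = 0) :
    ∫ ω, deriv f (c * ⟪X ω, u⟫) * ⟪X ω, u⟫ ∂P = 0 := by
  have h := fderiv_popLoss_apply lam hf hf' hX (mkp 0 (c • u)) (mkp 0 u)
  rw [show fderiv ℝ (popLoss P X f lam) (mkp 0 (c • u)) = 0 by simpa [gradient] using hgrad] at h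
  simp only [inner_mkp_mkp, real_inner_smul_right] at h
  simpa using h.symm

end PopLoss

section Moments

variable {Ω : Type*} [MeasurableSpace Ω] {P : Measure Ω}

theorem memLp_of_integrable_abs_rpow {g : Ω → ℝ} (hg : AEStronglyMeasurable g P) {p : ℝ}
    (hp : 0 < p) (h : Integrable (fun ω => |g ω| ^ p) P) : MemLp g (ENNReal.ofReal p) P :=
  (integrable_norm_rpow_iff hg (by simpa using hp) ENNReal.ofReal_ne_top).mp
    (by simpa [ENNReal.toReal_ofReal hp.le] using h)

theorem memLp_of_memLp_inner {E : Type*} [NormedAddCommGroup E] [InnerProductSpace ℝ E]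
    [FiniteDimensional ℝ E] {Z : Ω → E} {p : ℝ≥0∞}
    (h : ∀ u : E, ‖u‖ = 1 → MemLp (fun ω => ⟪u, Z ω⟫) p P) : MemLp Z p P := by
  let b := stdOrthonormalBasis ℝ E
  have hZ : Z = fun ω => ∑ i, ⟪b i, Z ω⟫ • b i := funext fun ω => (b.sum_repr' (Z ω)).symm
  rw [hZ]
  exact memLp_finsetSum _ fun i _ =>
    (ContinuousLinearMap.toSpanSingleton ℝ (b i)).comp_memLp' (h (b i) (b.orthonormal.1 i))

theorem memLp_smul_const_add [IsFiniteMeasure P] {E : Type*} [NormedAddCommGroup E]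
    [NormedSpace ℝ E] {Y : Ω → ℝ} {Z : Ω → E} {p : ℝ≥0∞} (hY : AEStronglyMeasurable Y P)
    (hY1 : ∀ ω, |Y ω| = 1) (hZ : MemLp Z p P) (v : E) :
    MemLp (fun ω => Y ω • v + Z ω) p P :=
  ((ContinuousLinearMap.toSpanSingleton ℝ v).comp_memLp'
    (MemLp.of_bound hY 1 (.of_forall fun ω => (hY1 ω).le))).add hZ

theorem integral_const_mul_add_sq_of_indepFun [IsProbabilityMeasure P] {Y g : Ω → ℝ}
    (hY : AEStronglyMeasurable Y P) (hY1 : ∀ ω, |Y ω| = 1) (hg : MemLp g 2 P)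
    (hg0 : ∫ ω, g ω ∂P = 0) (hind : IndepFun Y g P) (m : ℝ) :
    ∫ ω, (m * Y ω + g ω) ^ 2 ∂P = m ^ 2 + ∫ ω, g ω ^ 2 ∂P := by
  have hYg : Integrable (fun ω => Y ω * g ω) P :=
    (hg.integrable one_le_two).bdd_mul hY (.of_forall fun ω => (hY1 ω).le)
  have hexpand (ω : Ω) : (m * Y ω + g ω) ^ 2 = m ^ 2 + 2 * m * (Y ω * g ω) + g ω ^ 2 := by
    have hY2 : Y ω ^ 2 = 1 := by rw [← sq_abs, hY1, one_pow]
    linear_combination m ^ 2 * hY2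
  simp only [hexpand]
  rw [integral_add ?_ hg.integrable_sq, integral_add (integrable_const _) (hYg.const_mul _),
    integral_const_mul, hind.integral_fun_mul_eq_mul_integral hY hg.1, hg0]
  · simp
  · exact (integrable_const _).add (hYg.const_mul _)

theorem integral_const_mul_add_inner_sq {E : Type*} [NormedAddCommGroup E]
    [InnerProductSpace ℝ E] [CompleteSpace E] [MeasurableSpace E] [OpensMeasurableSpace E]
    [IsProbabilityMeasure P] {Y : Ω → ℝ} {Z : Ω → E}
    (hY : AEStronglyMeasurable Y P) (hY1 : ∀ ω, |Y ω| = 1) (hZ : MemLp Z 2 P)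
    (hZmean : ∫ ω, Z ω ∂P = 0) (hZcov : ∀ u v : E, ∫ ω, ⟪u, Z ω⟫ * ⟪v, Z ω⟫ ∂P = ⟪u, v⟫)
    (hind : IndepFun Y Z P) {u : E} (hu : ‖u‖ = 1) (m : ℝ) :
    ∫ ω, (m * Y ω + ⟪u, Z ω⟫) ^ 2 ∂P = m ^ 2 + 1 := by
  have hmean : ∫ ω, ⟪u, Z ω⟫ ∂P = 0 := by
    rw [integral_inner (hZ.integrable one_le_two), hZmean, inner_zero_right]
  have hvar : ∫ ω, ⟪u, Z ω⟫ ^ 2 ∂P = 1 := by simpa [← sq, hu] using hZcov u u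
  rw [integral_const_mul_add_sq_of_indepFun hY hY1 (hZ.const_inner u) hmean
    (hind.comp measurable_id (continuous_const.inner continuous_id).measurable), hvar]

end Moments

theorem neg_deriv_mul_integral_sq_le {Ω : Type*} [MeasurableSpace Ω] {P : Measure Ω}
    [IsFiniteMeasure P] {φ : ℝ → ℝ} {K : ℝ≥0} (hφ : Differentiable ℝ φ) (hφ0 : φ 0 = 0)
    (hK : LipschitzWith K (deriv φ)) {W : Ω → ℝ} (hW : MemLp W 3 P) {c : ℝ} (hc : 0 < c)
    (hcrit : ∫ ω, φ (c * W ω) * W ω ∂P = 0) :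
    -deriv φ 0 * ∫ ω, W ω ^ 2 ∂P ≤ K * c * ∫ ω, |W ω| ^ 3 ∂P := by
  set A := deriv φ 0
  have hW2 : Integrable (fun ω => W ω ^ 2) P :=
    (hW.mono_exponent (by norm_num)).integrable_sq
  have hW3 : Integrable (fun ω => |W ω| ^ 3) P := by
    simpa using hW.integrable_norm_pow (p := 3) three_ne_zero
  set r : Ω → ℝ := fun ω => φ (c * W ω) * W ω - A * c * W ω ^ 2
  have hr (ω : Ω) : |r ω| ≤ K * c ^ 2 * |W ω| ^ 3 := by
    calc |r ω| = |(φ (c * W ω) - φ 0 - A * (c * W ω)) * W ω| := by simp only [r, hφ0]; ring_nf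
      _ = |φ (c * W ω) - φ 0 - A * (c * W ω)| * |W ω| := abs_mul _ _
      _ ≤ K * (c * W ω) ^ 2 * |W ω| := by
          gcongr; exact abs_sub_sub_deriv_mul_le_of_lipschitzWith hφ hK _
      _ = K * c ^ 2 * |W ω| ^ 3 := by rw [mul_pow, ← sq_abs (W ω)]; ring
  have hrint : Integrable r P :=
    (hW3.const_mul _).mono' (((hφ.continuous.comp_aestronglyMeasurable
      (hW.1.const_mul c)).mul hW.1).sub (hW.1.pow 2 |>.const_mul _))
      (.of_forall fun ω => by simpa using hr ω)
  have hsplit : ∫ ω, φ (c * W ω) * W ω ∂P = (∫ ω, r ω ∂P) + A * c * ∫ ω, W ω ^ 2 ∂P := by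
    rw [← integral_const_mul, ← integral_add hrint (hW2.const_mul _)]
    simp [r]
  have hbound : ∫ ω, r ω ∂P ≤ K * c ^ 2 * ∫ ω, |W ω| ^ 3 ∂P := by
    rw [← integral_const_mul]
    exact (le_abs_self _).trans (abs_integral_le_integral_abs.trans
      (integral_mono hrint.abs (hW3.const_mul _) hr))
  nlinarith

theorem critical_points_on_signal_line_lower_bound_general
    {d : ℕ} {Ω : Type*} [MeasurableSpace Ω] (P : Measure Ω) [IsProbabilityMeasure P]
    (Y : Ω → ℝ) (Z : Ω → Vec d) (X : Ω → Vec d) (μ : Vec d) (M lam : ℝ)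
    (hμ : μ ≠ 0)
    (hY : Measurable Y) (hZ : Measurable Z)
    (hYpm : ∀ ω, Y ω = 1 ∨ Y ω = -1)
    (hindep : IndepFun Y Z P)
    (hZsg : ∀ u : Vec d, ‖u‖ = 1 → ∀ p : ℝ, 1 ≤ p →
      Integrable (fun ω => |⟪u, Z ω⟫| ^ p) P ∧
        (∫ ω, |⟪u, Z ω⟫| ^ p ∂P) ^ (1 / p) ≤ Real.sqrt p * M)
    (hZmean : (∫ ω, Z ω ∂P) = 0)
    (hZcov : ∀ u v : Vec d, (∫ ω, ⟪u, Z ω⟫ * ⟪v, Z ω⟫ ∂P) = ⟪u, v⟫)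
    (hX : ∀ ω, X ω = Y ω • μ + Z ω)
    (f : ℝ → ℝ) (hf : ContDiff ℝ 2 f) (hfeven : ∀ x, f (-x) = f x)
    (hf2bdd : ∃ F₂ : ℝ, ∀ x, |deriv (deriv f) x| ≤ F₂)
    (F₃ : ℝ) (hF₃ : 0 ≤ F₃)
    (hfLip : LipschitzWith (Real.toNNReal F₃) (deriv (deriv f))) :
    ∀ c : ℝ, 0 < c →
      gradient (popLoss P X f lam) (mkp 0 (c • (‖μ‖⁻¹ • μ))) = 0 →
      -(deriv (deriv f) 0) * (‖μ‖ ^ 2 + 1) /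
          (F₃ * ∫ ω, |‖μ‖ * Y ω + ⟪‖μ‖⁻¹ • μ, Z ω⟫| ^ 3 ∂P) ≤ c := by
  intro c hc hgrad
  set u : Vec d := ‖μ‖⁻¹ • μ
  set W : Ω → ℝ := fun ω => ‖μ‖ * Y ω + ⟪u, Z ω⟫
  have hYabs (ω : Ω) : |Y ω| = 1 := by rcases hYpm ω with h | h <;> simp [h]
  have hZ3 : MemLp Z 3 P := memLp_of_memLp_inner fun v hv => by
    simpa using memLp_of_integrable_abs_rpow (aestronglyMeasurable_const.inner
      hZ.aestronglyMeasurable) three_pos (hZsg v hv 3 (by norm_num)).1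
  have hZ2 : MemLp Z 2 P := hZ3.mono_exponent (by norm_num)
  have hW3 : MemLp W 3 P := by
    simpa [W, mul_comm] using
      memLp_smul_const_add hY.aestronglyMeasurable hYabs (hZ3.const_inner u) ‖μ‖
  have hX2 : MemLp X 2 P := by
    simpa [← funext hX] using memLp_smul_const_add hY.aestronglyMeasurable hYabs hZ2 μ
  have hXu (ω : Ω) : ⟪X ω, u⟫ = W ω := by
    rw [hX ω, inner_add_left, real_inner_smul_left, real_inner_inv_norm_smul_self,
      real_inner_comm, mul_comm]
  obtain ⟨F₂, hF₂⟩ := hf2bdd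
  have hf'0 : deriv f 0 = 0 := Function.Even.deriv_zero hfeven
  have hcrit := integral_deriv_mul_inner_eq_zero_of_gradient_popLoss_eq_zero
    (hf.differentiable (by norm_num)) (abs_le_mul_abs_of_abs_deriv_le
      hf.differentiable_deriv_two hf'0 hF₂) hX2 u hgrad
  simp only [hXu] at hcrit
  have hW2 : ∫ ω, W ω ^ 2 ∂P = ‖μ‖ ^ 2 + 1 := integral_const_mul_add_inner_sq
    hY.aestronglyMeasurable hYabs hZ2 hZmean hZcov hindep (norm_smul_inv_norm hμ) ‖μ‖
  have key := neg_deriv_mul_integral_sq_le hf.differentiable_deriv_two hf'0 hfLip hW3 hc hcrit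
  rw [hW2, Real.coe_toNNReal _ hF₃] at key
  exact div_le_of_le_mul₀ (by positivity) hc.le (by linarith)

/-- under the centered model, for any even `f ∈ C²(ℝ)` with bounded second
derivative, `x f'(x) → +∞`, `f''(0) < 0`, and `f''` Lipschitz with constant `F₃` (so
`|f'''| ≤ F₃` a.e.), every `c > 0` making `(0, c·μ/‖μ‖₂)` a critical point of `L_λ` satisfies
`c ≥ −f''(0)(‖μ‖₂² + 1)/(F₃ · E|W|³)`, where `W = ‖μ‖₂ Y + (μ/‖μ‖₂)⊤Z`. -/
theorem critical_points_on_signal_line_lower_bound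
    {d : ℕ} {Ω : Type*} [MeasurableSpace Ω] (P : Measure Ω) [IsProbabilityMeasure P]
    (Y : Ω → ℝ) (Z : Ω → Vec d) (X : Ω → Vec d) (μ : Vec d) (M lam : ℝ)
    (hμ : μ ≠ 0) (hlam : 0 ≤ lam)
    (hY : Measurable Y) (hZ : Measurable Z)
    (hYpm : ∀ ω, Y ω = 1 ∨ Y ω = -1)
    (hY1 : P {ω | Y ω = 1} = 1 / 2) (hY2 : P {ω | Y ω = -1} = 1 / 2)
    (hindep : IndepFun Y Z P)
    (hZsg : ∀ u : Vec d, ‖u‖ = 1 → ∀ p : ℝ, 1 ≤ p →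
      Integrable (fun ω => |⟪u, Z ω⟫| ^ p) P ∧
        (∫ ω, |⟪u, Z ω⟫| ^ p ∂P) ^ (1 / p) ≤ Real.sqrt p * M)
    (hZmean : (∫ ω, Z ω ∂P) = 0)
    (hZcov : ∀ u v : Vec d, (∫ ω, ⟪u, Z ω⟫ * ⟪v, Z ω⟫ ∂P) = ⟪u, v⟫)
    (hZsym : ∀ O : Vec d ≃ₗᵢ[ℝ] Vec d,
      Measure.map (fun ω => O (Z ω)) P = Measure.map Z P)
    (hX : ∀ ω, X ω = Y ω • μ + Z ω)
    (f : ℝ → ℝ) (hf : ContDiff ℝ 2 f) (hfeven : ∀ x, f (-x) = f x)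
    (hf2bdd : ∃ F₂ : ℝ, ∀ x, |deriv (deriv f) x| ≤ F₂)
    (hflim : Filter.Tendsto (fun x => x * deriv f x) Filter.atTop Filter.atTop)
    (hf20 : deriv (deriv f) 0 < 0)
    (F₃ : ℝ) (hF₃ : 0 ≤ F₃)
    (hfLip : LipschitzWith (Real.toNNReal F₃) (deriv (deriv f))) :
    ∀ c : ℝ, 0 < c →
      gradient (popLoss P X f lam) (mkp 0 (c • (‖μ‖⁻¹ • μ))) = 0 →
      -(deriv (deriv f) 0) * (‖μ‖ ^ 2 + 1) /
          (F₃ * ∫ ω, |‖μ‖ * Y ω + ⟪‖μ‖⁻¹ • μ, Z ω⟫| ^ 3 ∂P) ≤ c :=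
  critical_points_on_signal_line_lower_bound_general P Y Z X μ M lam hμ hY hZ hYpm hindep hZsg
    hZmean hZcov hX f hf hfeven hf2bdd F₃ hF₃ hfLip
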